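/- For a 2×2 complex matrix X with normalized trace τ = (Tr X)/2, equality holds: ε(X) = ‖X − τI‖_∞ − ‖(|X − τI| + |X* − τ̄I|)/2‖_∞, and this common value equals ||x| − |y||/2 where X is unitarily equivalent to [[τ, y],[x, τ]]. -/

import Mathlib

open scoped Matrix ComplexOrder

noncomputable section

/-- The numerical range of a matrix. -/
def numRange {m : Type*} [Fintype m] (X : Matrix m m ℂ) : Set ℂ :=
  {z | ∃ v : m → ℂ, star v ⬝ᵥ v = 1 ∧ z = star v ⬝ᵥ X.mulVec v}

/-- The inradius of a subset of the plane: the radius of the largest disc it contains. -/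
def inRad (S : Set ℂ) : ℝ := sSup {r : ℝ | ∃ c : ℂ, Metric.closedBall c r ⊆ S}

/-- The indiameter: the diameter of the largest disc contained in the set. -/
def inDiam (S : Set ℂ) : ℝ := 2 * inRad S

/-- The numerical range of the compression of `X` to the subspace `S`. -/
def nrOn {m : Type*} [Fintype m] (X : Matrix m m ℂ) (S : Submodule ℂ (m → ℂ)) : Set ℂ :=
  {z | ∃ v ∈ S, star v ⬝ᵥ v = 1 ∧ z = star v ⬝ᵥ X.mulVec v}

/-- The elliptical width `δ₂(X)`: the supremum of the indiameters of the numerical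
ranges of compressions of `X` to two-dimensional subspaces. -/
def ellWidth {m : Type*} [Fintype m] (X : Matrix m m ℂ) : ℝ :=
  sSup {d | ∃ S : Submodule ℂ (m → ℂ), Module.finrank ℂ S = 2 ∧ d = inDiam (nrOn X S)}

/-- The operator (spectral) norm of a matrix. -/
def opNorm {m : Type*} [Fintype m] [DecidableEq m] (M : Matrix m m ℂ) : ℝ :=
  ‖Matrix.toEuclideanCLM (𝕜 := ℂ) M‖

/-- The Frobenius (Hilbert–Schmidt) norm of a matrix. -/
def frobNorm {m : Type*} [Fintype m] (M : Matrix m m ℂ) : ℝ :=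
  Real.sqrt ((Matrix.trace (Mᴴ * M)).re)

/-- Eigenvalues of a Hermitian matrix in decreasing order (junk value `0` otherwise):
`eigDesc M k` is the `(k+1)`-th largest eigenvalue of `M`. -/
def eigDesc {m : ℕ} (M : Matrix (Fin m) (Fin m) ℂ) (k : Fin m) : ℝ :=
  if h : M.IsHermitian then (h.eigenvalues ∘ Tuple.sort h.eigenvalues) k.rev else 0

/-- The absolute value `|X| = (XᴴX)^(1/2)` of a matrix. -/
def matAbs {m : Type*} [Fintype m] [DecidableEq m] (X : Matrix m m ℂ) : Matrix m m ℂ :=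
  ((Matrix.posSemidef_conjTranspose_mul_self X).1.eigenvectorUnitary : Matrix m m ℂ) *
    Matrix.diagonal ((↑) ∘ (√·) ∘ (Matrix.posSemidef_conjTranspose_mul_self X).1.eigenvalues) *
    (star (Matrix.posSemidef_conjTranspose_mul_self X).1.eigenvectorUnitary : Matrix m m ℂ)

/-- The `2n × 2n` block matrix `[[A, X],[Xᴴ, B]]`, reindexed by `Fin (n+n)`. -/
def blockR {n : ℕ} (A X B : Matrix (Fin n) (Fin n) ℂ) :
    Matrix (Fin (n + n)) (Fin (n + n)) ℂ :=
  (Matrix.fromBlocks A X Xᴴ B).submatrix finSumFinEquiv.symm finSumFinEquiv.symm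

/-- The operator norm distance from `X` to the scalar matrices. -/
def distScalar {m : Type*} [Fintype m] [DecidableEq m] (X : Matrix m m ℂ) : ℝ :=
  ⨅ a : ℂ, opNorm (X - a • 1)

/-- Apply a real function to a Hermitian matrix by the functional calculus
(junk value `0` if the matrix is not Hermitian). -/
def hermApply {m : Type*} [Fintype m] [DecidableEq m] (f : ℝ → ℝ) (M : Matrix m m ℂ) :
    Matrix m m ℂ :=
  if h : M.IsHermitian then h.cfc f else 0

end

/-!
Everything in the statement is invariant under unitary conjugation, so one may take
`X = τ + N` with `N = [[0, y], [x, 0]]`. The numerical range of `X` is then the image of the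
disc `‖s‖ ≤ 1/2` under `s ↦ τ + x s + y s̄` (take `s = v₀ v̄₁` for a unit vector `v`), an elliptical
disc whose inradius is its minor semi-axis `|‖x‖ - ‖y‖| / 2`: the concentric disc of that
radius fits inside, and the whole set lies in a strip of that half-width. On the operator side, `‖N‖ = max ‖x‖ ‖y‖`,
while `|N| = diag(‖x‖, ‖y‖)` and `|Nᴴ| = diag(‖y‖, ‖x‖)` add up to `(‖x‖ + ‖y‖) I`;
and `max a b - (a + b) / 2 = |a - b| / 2`.
-/

open scoped MatrixOrder Matrix.Norms.L2Operator
open Matrix Metric ComplexConjugate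

section UnitaryInvariance

variable {m : Type*} [Fintype m]

lemma dotProduct_mulVec_conj (A V : Matrix m m ℂ) (v : m → ℂ) :
    star v ⬝ᵥ ((V * A * Vᴴ) *ᵥ v) = star (Vᴴ *ᵥ v) ⬝ᵥ (A *ᵥ (Vᴴ *ᵥ v)) := by
  simp only [star_mulVec, conjTranspose_conjTranspose, dotProduct_mulVec, vecMul_vecMul,
    mul_assoc]

variable [DecidableEq m]

lemma numRange_conj_subset (A : Matrix m m ℂ) {V : Matrix m m ℂ} (hV : V * Vᴴ = 1) :
    numRange (V * A * Vᴴ) ⊆ numRange A := by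
  rintro _ ⟨v, hv, rfl⟩
  refine ⟨Vᴴ *ᵥ v, ?_, dotProduct_mulVec_conj A V v⟩
  have h := dotProduct_mulVec_conj 1 V v
  rwa [mul_one, hV, one_mulVec, one_mulVec, hv, eq_comm] at h

lemma numRange_unitary_conj (A : Matrix m m ℂ) (U : unitaryGroup m ℂ) :
    numRange ((U : Matrix m m ℂ) * A * (U : Matrix m m ℂ)ᴴ) = numRange A := by
  have hUU : (U : Matrix m m ℂ) * (U : Matrix m m ℂ)ᴴ = 1 := Unitary.coe_mul_star_self U
  have hUU' : (U : Matrix m m ℂ)ᴴ * U = 1 := Unitary.coe_star_mul_self U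
  refine (numRange_conj_subset A hUU).antisymm ?_
  have h := numRange_conj_subset ((U : Matrix m m ℂ) * A * (U : Matrix m m ℂ)ᴴ)
    (V := (U : Matrix m m ℂ)ᴴ) (by rwa [conjTranspose_conjTranspose])
  rwa [conjTranspose_conjTranspose, ← mul_assoc, ← mul_assoc, hUU', one_mul, mul_assoc, hUU',
    mul_one] at h

lemma opNorm_unitary_conj (A : Matrix m m ℂ) (U : unitaryGroup m ℂ) :
    opNorm ((U : Matrix m m ℂ) * A * (U : Matrix m m ℂ)ᴴ) = opNorm A := by
  change ‖(U : Matrix m m ℂ) * A * (star U : unitaryGroup m ℂ)‖ = ‖A‖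
  rw [CStarRing.norm_mul_coe_unitary, CStarRing.norm_coe_unitary_mul]

lemma matAbs_eq_sqrt (A : Matrix m m ℂ) : matAbs A = CFC.sqrt (Aᴴ * A) := by
  have h0 : 0 ≤ Aᴴ * A := nonneg_iff_posSemidef.mpr (posSemidef_conjTranspose_mul_self A)
  rw [CFC.sqrt_eq_real_sqrt _ h0, cfcₙ_eq_cfc (hf0 := by simp),
    IsHermitian.cfc_eq (posSemidef_conjTranspose_mul_self A).1]
  rfl

lemma matAbs_eq_of_mul_self {A B : Matrix m m ℂ} (hB : B.PosSemidef) (h : B * B = Aᴴ * A) :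
    matAbs A = B := by
  rw [matAbs_eq_sqrt]
  exact CFC.sqrt_unique h (nonneg_iff_posSemidef.mpr hB)

lemma matAbs_unitary_conj (A : Matrix m m ℂ) (U : unitaryGroup m ℂ) :
    matAbs ((U : Matrix m m ℂ) * A * (U : Matrix m m ℂ)ᴴ) =
      (U : Matrix m m ℂ) * matAbs A * (U : Matrix m m ℂ)ᴴ := by
  have hUU : (U : Matrix m m ℂ)ᴴ * U = 1 := Unitary.coe_star_mul_self U
  have hconj (X Y : Matrix m m ℂ) : (U : Matrix m m ℂ) * X * (U : Matrix m m ℂ)ᴴ *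
      ((U : Matrix m m ℂ) * Y * (U : Matrix m m ℂ)ᴴ) = U * (X * Y) * (U : Matrix m m ℂ)ᴴ := by
    simp only [mul_assoc]
    rw [← mul_assoc (U : Matrix m m ℂ)ᴴ, hUU, one_mul]
  have hsq : matAbs A * matAbs A = Aᴴ * A := by
    rw [matAbs_eq_sqrt]
    exact CFC.sqrt_mul_sqrt_self _ (nonneg_iff_posSemidef.mpr (posSemidef_conjTranspose_mul_self A))
  have hA : (matAbs A).PosSemidef := by
    rw [← nonneg_iff_posSemidef, matAbs_eq_sqrt]
    exact CFC.sqrt_nonneg _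
  refine matAbs_eq_of_mul_self (hA.mul_mul_conjTranspose_same (U : Matrix m m ℂ)) ?_
  rw [hconj, hsq, ← hconj, conjTranspose_mul, conjTranspose_mul, conjTranspose_conjTranspose]
  simp only [mul_assoc]

end UnitaryInvariance

lemma exists_norm_sq_add_norm_sq_eq_one_mul_conj {s : ℂ} (hs : ‖s‖ ≤ 1 / 2) :
    ∃ a b : ℂ, ‖a‖ ^ 2 + ‖b‖ ^ 2 = 1 ∧ a * conj b = s := by
  set r := √(1 - 4 * ‖s‖ ^ 2)
  have hr : r ^ 2 = 1 - 4 * ‖s‖ ^ 2 := Real.sq_sqrt (by nlinarith [norm_nonneg s])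
  set p := (1 + r) / 2
  have hp : 0 < p := by positivity
  have hps : p * (1 - p) = ‖s‖ ^ 2 := by linear_combination (-1 / 4 : ℝ) * hr
  have hp' : ((√p : ℝ) : ℂ) ≠ 0 := by exact_mod_cast (Real.sqrt_pos.2 hp).ne'
  refine ⟨√p, conj s / √p, ?_, ?_⟩
  · rw [norm_div, Complex.norm_conj, Complex.norm_real, Real.norm_of_nonneg (Real.sqrt_nonneg _),
      div_pow, Real.sq_sqrt hp.le, ← hps]
    field_simp
    ring
  · rw [map_div₀, Complex.conj_conj, Complex.conj_ofReal]
    field_simp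

lemma exists_norm_eq_one_sq_mul_eq_norm (w : ℂ) : ∃ u : ℂ, ‖u‖ = 1 ∧ u ^ 2 * w = ‖w‖ := by
  refine ⟨Complex.exp (↑(-(w.arg / 2)) * Complex.I), Complex.norm_exp_ofReal_mul_I _, ?_⟩
  nth_rw 2 [← Complex.norm_mul_exp_arg_mul_I w]
  rw [← Complex.exp_nat_mul, mul_left_comm, ← Complex.exp_add]
  push_cast
  ring_nf
  simp

lemma norm_mul_sub_conj_mul {u x y : ℂ} (hu : ‖u‖ = 1) (h : u ^ 2 * (x * y) = ‖x * y‖) :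
    ‖u * x - conj (u * y)‖ = |‖x‖ - ‖y‖| := by
  rw [← Real.sqrt_sq (norm_nonneg _), ← Real.sqrt_sq_eq_abs, Complex.sq_norm, Complex.normSq_sub,
    Complex.conj_conj, show u * x * (u * y) = u ^ 2 * (x * y) by ring, h, Complex.ofReal_re,
    Complex.normSq_conj, ← Complex.sq_norm, ← Complex.sq_norm, norm_mul, norm_mul, norm_mul, hu]
  ring_nf

def ellipticalDisc (τ x y : ℂ) : Set ℂ :=
  {z | ∃ s : ℂ, ‖s‖ ≤ 1 / 2 ∧ z = τ + x * s + y * conj s}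

lemma dotProduct_mulVec_fin_two (τ x y : ℂ) (v : Fin 2 → ℂ) :
    star v ⬝ᵥ (!![τ, y; x, τ] *ᵥ v) =
      τ * (star v ⬝ᵥ v) + x * (v 0 * conj (v 1)) + y * conj (v 0 * conj (v 1)) := by
  simp only [dotProduct, mulVec, Fin.sum_univ_two, Pi.star_apply, of_apply, cons_val',
    cons_val_zero, cons_val_one, empty_val', cons_val_fin_one, map_mul, Complex.conj_conj, Complex.star_def]
  ring

lemma star_dotProduct_self_fin_two (v : Fin 2 → ℂ) :
    star v ⬝ᵥ v = ((‖v 0‖ ^ 2 + ‖v 1‖ ^ 2 : ℝ) : ℂ) := by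
  simp [dotProduct, Fin.sum_univ_two, Complex.conj_mul']

lemma numRange_fin_two (τ x y : ℂ) : numRange !![τ, y; x, τ] = ellipticalDisc τ x y := by
  ext z
  constructor
  · rintro ⟨v, hv, rfl⟩
    refine ⟨v 0 * conj (v 1), ?_, by rw [dotProduct_mulVec_fin_two, hv, mul_one]⟩
    rw [star_dotProduct_self_fin_two, Complex.ofReal_eq_one] at hv
    rw [norm_mul, Complex.norm_conj]
    nlinarith [sq_nonneg (‖v 0‖ - ‖v 1‖)]
  · rintro ⟨s, hs, rfl⟩
    obtain ⟨a, b, hab, rfl⟩ := exists_norm_sq_add_norm_sq_eq_one_mul_conj hs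
    have hv : star ![a, b] ⬝ᵥ ![a, b] = 1 := by
      rw [star_dotProduct_self_fin_two]
      exact_mod_cast hab
    refine ⟨![a, b], hv, ?_⟩
    rw [dotProduct_mulVec_fin_two, hv, mul_one]
    rfl

lemma inRad_eq_of_closedBall_subset {S : Set ℂ} {c : ℂ} {r : ℝ} (hc : closedBall c r ⊆ S)
    (hr : ∀ c' r', closedBall c' r' ⊆ S → r' ≤ r) : inRad S = r :=
  IsGreatest.csSup_eq ⟨⟨c, hc⟩, fun _ ⟨c', h⟩ ↦ hr c' _ h⟩

lemma le_of_closedBall_subset_strip {c a u : ℂ} {r b : ℝ} (hu : ‖u‖ = 1) (hb : 0 ≤ b)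
    (h : closedBall c r ⊆ {z | |(u * (z - a)).im| ≤ b}) : r ≤ b := by
  rcases le_or_gt r 0 with hr | hr
  · linarith
  have huu : u * conj u = 1 := by rw [Complex.mul_conj, Complex.normSq_eq_norm_sq, hu]; simp
  have hw : ‖(r : ℂ) * Complex.I * conj u‖ = r := by
    rw [norm_mul, norm_mul, Complex.norm_conj, hu, Complex.norm_I, Complex.norm_real,
      Real.norm_of_nonneg hr.le, mul_one, mul_one]
  have hp := h (mem_closedBall.2 (by rw [dist_eq_norm, add_sub_cancel_left, hw]) :
    c + r * Complex.I * conj u ∈ _)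
  have hm := h (mem_closedBall.2 (by rw [dist_eq_norm, sub_sub_cancel_left, norm_neg, hw]) :
    c - r * Complex.I * conj u ∈ _)
  have ep : u * (c + r * Complex.I * conj u - a) = u * (c - a) + r * Complex.I := by
    linear_combination (r * Complex.I) * huu
  have em : u * (c - r * Complex.I * conj u - a) = u * (c - a) - r * Complex.I := by
    linear_combination (-r * Complex.I) * huu
  simp only [Set.mem_ofPred_eq, ep, em, Complex.add_im, Complex.sub_im, Complex.mul_I_im,
    Complex.ofReal_re, abs_le] at hp hm
  linarith

lemma closedBall_subset_ellipticalDisc (τ x y : ℂ) :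
    closedBall τ (|‖x‖ - ‖y‖| / 2) ⊆ ellipticalDisc τ x y := by
  intro z hz
  rw [mem_closedBall, dist_eq_norm] at hz
  rcases eq_or_ne ‖x‖ ‖y‖ with hxy | hxy
  · rw [hxy, sub_self, abs_zero, zero_div, norm_le_zero_iff, sub_eq_zero] at hz
    exact ⟨0, by norm_num, by simp [hz]⟩
  set D : ℝ := ‖x‖ ^ 2 - ‖y‖ ^ 2
  have hD : |D| = (‖x‖ + ‖y‖) * |‖x‖ - ‖y‖| := by
    rw [show D = (‖x‖ + ‖y‖) * (‖x‖ - ‖y‖) by ring, abs_mul, abs_of_nonneg (by positivity)]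
  have hD0 : 0 < |D| := abs_pos.2 <| sub_ne_zero.2 fun h ↦
    hxy ((pow_left_inj₀ (norm_nonneg _) (norm_nonneg _) two_ne_zero).mp h)
  -- `w ↦ (x̄ w - y w̄) / (‖x‖² - ‖y‖²)` inverts the real-linear map `s ↦ x s + y s̄`.
  refine ⟨(conj x * (z - τ) - y * conj (z - τ)) / D, ?_, ?_⟩
  · rw [norm_div, Complex.norm_real, Real.norm_eq_abs, div_le_iff₀ hD0, hD]
    calc ‖conj x * (z - τ) - y * conj (z - τ)‖ ≤ (‖x‖ + ‖y‖) * ‖z - τ‖ := by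
          refine (norm_sub_le _ _).trans_eq ?_
          rw [norm_mul, norm_mul, Complex.norm_conj, Complex.norm_conj]
          ring
      _ ≤ (‖x‖ + ‖y‖) * (|‖x‖ - ‖y‖| / 2) := by gcongr
      _ = 1 / 2 * ((‖x‖ + ‖y‖) * |‖x‖ - ‖y‖|) := by ring
  · have hDc : (D : ℂ) = x * conj x - y * conj y := by
      simp [D, Complex.mul_conj, Complex.normSq_eq_norm_sq]
    have : (D : ℂ) ≠ 0 := by exact_mod_cast (abs_pos.1 hD0)
    simp only [map_div₀, map_sub, map_mul, Complex.conj_conj, Complex.conj_ofReal]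
    field_simp
    linear_combination (z - τ) * hDc

lemma ellipticalDisc_subset_strip (τ x y : ℂ) : ∃ u : ℂ, ‖u‖ = 1 ∧
    ellipticalDisc τ x y ⊆ {z | |(u * (z - τ)).im| ≤ |‖x‖ - ‖y‖| / 2} := by
  -- Rotating by `u` with `u² x y ≥ 0` turns the minor axis of the disc vertical.
  obtain ⟨u, hu, hxy⟩ := exists_norm_eq_one_sq_mul_eq_norm (x * y)
  refine ⟨u, hu, ?_⟩
  rintro _ ⟨s, hs, rfl⟩
  have hsplit : u * (τ + x * s + y * conj s - τ) =
      (u * x - conj (u * y)) * s + ↑(2 * (conj (u * y) * s).re) := by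
    rw [← Complex.add_conj]
    simp only [map_mul, Complex.conj_conj]
    ring
  rw [Set.mem_ofPred_eq, hsplit, Complex.add_im, Complex.ofReal_im, add_zero]
  calc |((u * x - conj (u * y)) * s).im| ≤ ‖(u * x - conj (u * y)) * s‖ := Complex.abs_im_le_norm _
    _ ≤ |‖x‖ - ‖y‖| * (1 / 2) := by
        rw [norm_mul, norm_mul_sub_conj_mul hu hxy]
        gcongr
    _ = |‖x‖ - ‖y‖| / 2 := by ring

lemma inRad_ellipticalDisc (τ x y : ℂ) : inRad (ellipticalDisc τ x y) = |‖x‖ - ‖y‖| / 2 := by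
  obtain ⟨u, hu, hstrip⟩ := ellipticalDisc_subset_strip τ x y
  exact inRad_eq_of_closedBall_subset (closedBall_subset_ellipticalDisc τ x y)
    fun _ _ h ↦ le_of_closedBall_subset_strip hu (by positivity) (h.trans hstrip)

lemma opNorm_diagonal_fin_two (a b : ℂ) : opNorm (diagonal ![a, b]) = max ‖a‖ ‖b‖ := by
  change ‖diagonal ![a, b]‖ = _
  rw [l2_opNorm_diagonal]
  simp [Pi.norm_def, Fin.univ_succ]

lemma opNorm_antidiag (x y : ℂ) : opNorm !![0, y; x, 0] = max ‖x‖ ‖y‖ := by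
  have hswap : !![(0 : ℂ), 1; 1, 0] ∈ unitaryGroup (Fin 2) ℂ := by
    rw [mem_unitaryGroup_iff, star_eq_conjTranspose]
    ext i j
    fin_cases i <;> fin_cases j <;> simp [mul_apply, Fin.sum_univ_two]
  have hN : !![0, y; x, 0] = !![(0 : ℂ), 1; 1, 0] * diagonal ![x, y] := by
    ext i j
    fin_cases i <;> fin_cases j <;> simp
  rw [hN, ← opNorm_diagonal_fin_two]
  exact CStarRing.norm_mem_unitary_mul _ hswap

lemma matAbs_antidiag (x y : ℂ) : matAbs !![0, y; x, 0] = diagonal ![(‖x‖ : ℂ), ‖y‖] := by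
  refine matAbs_eq_of_mul_self ?_ ?_
  · rw [posSemidef_diagonal_iff]
    intro i
    fin_cases i <;> simp
  · rw [diagonal_mul_diagonal]
    ext i j
    fin_cases i <;> fin_cases j <;> simp [mul_apply, Fin.sum_univ_two, Complex.conj_mul', sq]

lemma conjTranspose_antidiag (x y : ℂ) : !![0, y; x, 0]ᴴ = !![0, conj x; conj y, 0] := by
  ext i j
  fin_cases i <;> fin_cases j <;> simp

lemma opNorm_matAbs_antidiag_add_matAbs_conjTranspose (x y : ℂ) :
    opNorm (matAbs !![0, y; x, 0] + matAbs !![0, y; x, 0]ᴴ) = ‖x‖ + ‖y‖ := by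
  rw [conjTranspose_antidiag, matAbs_antidiag, matAbs_antidiag, diagonal_add, Complex.norm_conj,
    Complex.norm_conj]
  calc _ = opNorm (diagonal ![((‖x‖ + ‖y‖ : ℝ) : ℂ), ((‖x‖ + ‖y‖ : ℝ) : ℂ)]) := by
        congr 2
        funext i
        fin_cases i <;> simp [add_comm]
    _ = ‖x‖ + ‖y‖ := by
        rw [opNorm_diagonal_fin_two, max_self, Complex.norm_real, Real.norm_of_nonneg (by positivity)]

theorem stmt19_general (X : Matrix (Fin 2) (Fin 2) ℂ) (τ x y : ℂ)
    (U : Matrix.unitaryGroup (Fin 2) ℂ)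
    (hX : X = (U : Matrix (Fin 2) (Fin 2) ℂ) * !![τ, y; x, τ] *
      (U : Matrix (Fin 2) (Fin 2) ℂ)ᴴ) :
    inRad (numRange X) =
      opNorm (X - τ • 1) -
        opNorm (matAbs (X - τ • 1) + matAbs (Xᴴ - (starRingEnd ℂ) τ • 1)) / 2 ∧
    inRad (numRange X) = |‖x‖ - ‖y‖| / 2 := by
  set N : Matrix (Fin 2) (Fin 2) ℂ := !![0, y; x, 0]
  have hUU : (U : Matrix (Fin 2) (Fin 2) ℂ) * (U : Matrix (Fin 2) (Fin 2) ℂ)ᴴ = 1 :=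
    Unitary.coe_mul_star_self U
  have hshift : X - τ • 1 = U * N * (U : Matrix (Fin 2) (Fin 2) ℂ)ᴴ := by
    have hN : N = !![τ, y; x, τ] - τ • 1 := by
      ext i j
      fin_cases i <;> fin_cases j <;> simp [N]
    rw [hX, hN, mul_sub, sub_mul, Matrix.mul_smul, mul_one, Matrix.smul_mul, hUU]
  have hshift' : Xᴴ - conj τ • 1 = U * Nᴴ * (U : Matrix (Fin 2) (Fin 2) ℂ)ᴴ := by
    change Xᴴ - star τ • 1 = _
    rw [← conjTranspose_one, ← conjTranspose_smul, ← conjTranspose_sub, hshift,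
      conjTranspose_mul, conjTranspose_mul, conjTranspose_conjTranspose, mul_assoc]
  have hnr : inRad (numRange X) = |‖x‖ - ‖y‖| / 2 := by
    rw [hX, numRange_unitary_conj, numRange_fin_two, inRad_ellipticalDisc]
  refine ⟨?_, hnr⟩
  rw [hnr, hshift, hshift', matAbs_unitary_conj, matAbs_unitary_conj, ← add_mul, ← mul_add,
    opNorm_unitary_conj, opNorm_unitary_conj, opNorm_antidiag,
    opNorm_matAbs_antidiag_add_matAbs_conjTranspose]
  linarith [max_sub_min_eq_abs' ‖x‖ ‖y‖, min_add_max ‖x‖ ‖y‖]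

/-- For a `2 × 2` matrix `X` with normalized trace `τ`, unitarily equivalent
to `[[τ, y],[x, τ]]`, the inradius of the numerical range equals
`‖X - τI‖ - ‖(|X - τI| + |Xᴴ - τ̄I|)/2‖`, and this common value is `||x| - |y||/2`. -/
theorem stmt19 (X : Matrix (Fin 2) (Fin 2) ℂ) (τ x y : ℂ)
    (hτ : τ = Matrix.trace X / 2)
    (U : Matrix.unitaryGroup (Fin 2) ℂ)
    (hX : X = (U : Matrix (Fin 2) (Fin 2) ℂ) * !![τ, y; x, τ] *
      (U : Matrix (Fin 2) (Fin 2) ℂ)ᴴ) :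
    inRad (numRange X) =
      opNorm (X - τ • 1) -
        opNorm (matAbs (X - τ • 1) + matAbs (Xᴴ - (starRingEnd ℂ) τ • 1)) / 2 ∧
    inRad (numRange X) = |‖x‖ - ‖y‖| / 2 :=
  stmt19_general X τ x y U hX
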